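/- arXiv:1811.06595 — 2 statements merged into one kernel-verified Lean document; each statement's English description precedes it below -/
import Mathlib

section
/- The function f(θ) = sin(θ) is concave on the interval (0, π); consequently, for positive angles θ_1,...,θ_n with each partial sum of k consecutive angles (cyclically) lying in (0, 2π), one has Σ_{i=1}^n log sin((θ_i + θ_{i+1} + ... + θ_{i+k-1})/2) ≤ n log sin(kπ/n), where indices are taken modulo n and θ_1 + ... + θ_n = 2π. -/
/-! Every angle lies in exactly `k` of the `n` cyclic windows, so the halved window sums, which lie
in `(0, π)`, have mean `kπ/n`. As `log ∘ sin` is concave on `(0, π)`, Jensen's inequality gives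
the bound. -/

open Finset Real

theorem Finset.sum_range_add_mod {M : Type*} [AddCommMonoid M] (f : ℕ → M) {n : ℕ} (hn : 0 < n)
    (j : ℕ) : ∑ i ∈ range n, f ((i + j) % n) = ∑ i ∈ range n, f i := by
  have : NeZero n := ⟨hn.ne'⟩
  have hval : ∀ i : Fin n, (i + j) % n = ((i + Fin.ofNat n j : Fin n) : ℕ) := fun i => by
    rw [Fin.val_add, Fin.val_ofNat, Nat.add_mod_mod]
  rw [← Fin.sum_univ_eq_sum_range (fun i => f ((i + j) % n)), ← Fin.sum_univ_eq_sum_range]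
  simp only [hval]
  exact Equiv.sum_comp (Equiv.addRight (Fin.ofNat n j)) (fun i : Fin n => f i)

theorem Finset.sum_range_sum_range_add_mod {M : Type*} [AddCommMonoid M] (f : ℕ → M) {n : ℕ}
    (hn : 0 < n) (k : ℕ) :
    ∑ i ∈ range n, ∑ j ∈ range k, f ((i + j) % n) = k • ∑ i ∈ range n, f i := by
  rw [sum_comm, sum_congr rfl fun j _ => sum_range_add_mod f hn j, sum_const, card_range]

theorem ConcaveOn.sum_le_card_mul_map_average {ι E : Type*} [AddCommGroup E] [Module ℝ E]
    {s : Set E} {f : E → ℝ} (hf : ConcaveOn ℝ s f) {t : Finset ι} (ht : t.Nonempty) {x : ι → E}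
    (hx : ∀ i ∈ t, x i ∈ s) :
    ∑ i ∈ t, f (x i) ≤ #t * f ((#t : ℝ)⁻¹ • ∑ i ∈ t, x i) := by
  have hcard : (0 : ℝ) < #t := by exact_mod_cast ht.card_pos
  have hjensen := hf.le_map_sum (t := t) (w := fun _ => (#t : ℝ)⁻¹) (fun _ _ => by positivity)
    (by rw [sum_const, nsmul_eq_mul, mul_inv_cancel₀ hcard.ne']) hx
  rw [← smul_sum, ← smul_sum, smul_eq_mul] at hjensen
  calc ∑ i ∈ t, f (x i) = #t * ((#t : ℝ)⁻¹ * ∑ i ∈ t, f (x i)) := by field_simp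
    _ ≤ _ := by gcongr

theorem Real.concaveOn_sin_Ioo : ConcaveOn ℝ (Set.Ioo 0 π) sin :=
  strictConcaveOn_sin_Icc.concaveOn.subset Set.Ioo_subset_Icc_self (convex_Ioo _ _)

theorem Real.concaveOn_log_sin : ConcaveOn ℝ (Set.Ioo 0 π) (fun x => log (sin x)) := by
  have hpos : sin '' Set.Ioo 0 π ⊆ Set.Ioi 0 := by
    rintro _ ⟨x, hx, rfl⟩
    exact sin_pos_of_pos_of_lt_pi hx.1 hx.2
  have hconvex : Convex ℝ (sin '' Set.Ioo 0 π) :=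
    (isPreconnected_Ioo.image sin continuous_sin.continuousOn).convex
  exact (strictConcaveOn_log_Ioi.concaveOn.subset hpos hconvex).comp concaveOn_sin_Ioo
    (strictMonoOn_log.monotoneOn.mono hpos)

theorem stmt1_general (n k : ℕ) (hn : 2 ≤ n)
    (θ : ℕ → ℝ)
    (hsum : ∑ i ∈ Finset.range n, θ i = 2 * Real.pi)
    (hcyc : ∀ i < n, (∑ j ∈ Finset.range k, θ ((i + j) % n)) ∈ Set.Ioo 0 (2 * Real.pi)) :
    ConcaveOn ℝ (Set.Ioo 0 Real.pi) Real.sin ∧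
      ∑ i ∈ Finset.range n,
          Real.log (Real.sin ((∑ j ∈ Finset.range k, θ ((i + j) % n)) / 2))
        ≤ (n : ℝ) * Real.log (Real.sin ((k : ℝ) * Real.pi / n)) := by
  refine ⟨concaveOn_sin_Ioo, ?_⟩
  have hn0 : 0 < n := by omega
  have hmem : ∀ i ∈ range n, (∑ j ∈ range k, θ ((i + j) % n)) / 2 ∈ Set.Ioo 0 π := by
    intro i hi
    obtain ⟨h0, h2π⟩ := hcyc i (mem_range.1 hi)
    constructor <;> linarith
  have hmean : (n : ℝ)⁻¹ • ∑ i ∈ range n, (∑ j ∈ range k, θ ((i + j) % n)) / 2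
      = k * π / n := by
    rw [← sum_div, sum_range_sum_range_add_mod θ hn0, hsum, smul_eq_mul,
      nsmul_eq_mul]
    field_simp
  have hjensen :=
    concaveOn_log_sin.sum_le_card_mul_map_average (nonempty_range_iff.2 hn0.ne') hmem
  rwa [card_range, hmean] at hjensen

/-- sin is concave on (0,π); consequently, for positive θ_1,...,θ_n summing to 2π
with every cyclic partial sum of k consecutive angles in (0, 2π), we have the
Jensen-type inequality
Σ_i log sin((θ_i + ... + θ_{i+k-1})/2) ≤ n log sin(kπ/n) (indices mod n). -/
theorem stmt1 (n k : ℕ) (hn : 2 ≤ n) (hk : 1 ≤ k) (hkn : 2 * k ≤ n)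
    (θ : ℕ → ℝ) (hθ : ∀ i < n, 0 < θ i)
    (hsum : ∑ i ∈ Finset.range n, θ i = 2 * Real.pi)
    (hcyc : ∀ i < n, (∑ j ∈ Finset.range k, θ ((i + j) % n)) ∈ Set.Ioo 0 (2 * Real.pi)) :
    ConcaveOn ℝ (Set.Ioo 0 Real.pi) Real.sin ∧
      ∑ i ∈ Finset.range n,
          Real.log (Real.sin ((∑ j ∈ Finset.range k, θ ((i + j) % n)) / 2))
        ≤ (n : ℝ) * Real.log (Real.sin ((k : ℝ) * Real.pi / n)) :=
  stmt1_general n k hn θ hsum hcyc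
end

section
/- Let α = 1 - r_1² - r_2² and β = 2 r_1 r_2 with r_1, r_2 ≥ 0. If the function θ ↦ Π_{k=0}^{n-1} (α + β cos(θ + 2kπ/n)) is constant in θ (for n ≥ 1), then β = 0, i.e. r_1 = 0 or r_2 = 0. -/
/-!
With `z = e^{iφ}` and `ρ + ρ⁻¹ = -2α/β` (solvable over `ℂ` when `β ≠ 0`),
`α + β cos φ = -(β/2) ρ⁻¹ (ρ - z)(ρ - z⁻¹)`. Over the points `z = e^{iθ} ζ^k`, `ζ = e^{2πi/n}`,
the identity `∏ₖ (x - ζ^k y) = x^n - y^n` collapses the product to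
`(-β/2)^n (ρ^n + ρ⁻ⁿ - 2 cos nθ)`. So the product is `c - 2 (-β/2)^n cos nθ`, and comparing
`θ = 0` with `θ = π/n` forces `β^n = 0`.
-/

open Finset Polynomial
open scoped Real

namespace IsPrimitiveRoot

variable {K : Type*} [Field K] {n : ℕ} {ζ : K}

theorem prod_range_sub_pow_mul (hζ : IsPrimitiveRoot ζ n) (hn : 0 < n) (x y : K) :
    ∏ k ∈ range n, (x - ζ ^ k * y) = x ^ n - y ^ n := by
  have := congrArg (eval x) (X_pow_sub_C_eq_prod hζ hn (rfl : y ^ n = y ^ n))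
  simpa [eval_prod] using this.symm

theorem prod_range_add_inv_sub_add_inv (hζ : IsPrimitiveRoot ζ n) (hn : 0 < n) {w ρ : K}
    (hw : w ≠ 0) (hρ : ρ ≠ 0) :
    ∏ k ∈ range n, (w * ζ ^ k + (w * ζ ^ k)⁻¹ - (ρ + ρ⁻¹)) =
      (-1) ^ n * (ρ ^ n + ρ⁻¹ ^ n - (w ^ n + w⁻¹ ^ n)) := by
  have hζ0 : ζ ≠ 0 := hζ.ne_zero hn.ne'
  have factor : ∀ k ∈ range n, w * ζ ^ k + (w * ζ ^ k)⁻¹ - (ρ + ρ⁻¹) =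
      -ρ⁻¹ * ((ρ - ζ ^ k * w) * (ρ - ζ⁻¹ ^ k * w⁻¹)) := fun k _ => by
    rw [inv_pow]
    field_simp
    ring
  rw [prod_congr rfl factor, prod_mul_distrib, prod_mul_distrib, prod_const, card_range,
    hζ.prod_range_sub_pow_mul hn, hζ.inv.prod_range_sub_pow_mul hn, neg_pow]
  simp only [inv_pow]
  field_simp
  ring

end IsPrimitiveRoot

theorem IsAlgClosed.exists_add_inv_eq {K : Type*} [Field K] [IsAlgClosed K] (u : K) :
    ∃ ρ : K, ρ ≠ 0 ∧ ρ + ρ⁻¹ = u := by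
  have hdeg : (X ^ 2 - C u * X + 1 : K[X]).degree = 2 := by compute_degree!
  obtain ⟨ρ, hρ⟩ := IsAlgClosed.exists_root _ (hdeg ▸ two_ne_zero)
  have hρ' : ρ ^ 2 - u * ρ + 1 = 0 := by simpa using hρ
  have hρ0 : ρ ≠ 0 := by rintro rfl; simp at hρ'
  refine ⟨ρ, hρ0, ?_⟩
  field_simp
  linear_combination hρ'

namespace Complex

theorem two_cos_eq_exp_add_inv (z : ℂ) : 2 * cos z = exp (z * I) + (exp (z * I))⁻¹ := by
  rw [two_cos, ← exp_neg, neg_mul]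

theorem prod_range_add_mul_cos {n : ℕ} (hn : 0 < n) {α β ρ : ℂ} (hρ : ρ ≠ 0)
    (hαβ : β * (ρ + ρ⁻¹) = -2 * α) (θ : ℂ) :
    ∏ k ∈ range n, (α + β * cos (θ + 2 * k * π / n)) =
      (-β / 2) ^ n * (ρ ^ n + ρ⁻¹ ^ n - 2 * cos (n * θ)) := by
  set ζ := exp (2 * π * I / n)
  set w := exp (θ * I)
  have hexp : ∀ k : ℕ, exp ((θ + 2 * k * π / n) * I) = w * ζ ^ k := fun k => by
    rw [← exp_nat_mul, ← exp_add]
    ring_nf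
  have factor : ∀ k ∈ range n, α + β * cos (θ + 2 * k * π / n) =
      β / 2 * (w * ζ ^ k + (w * ζ ^ k)⁻¹ - (ρ + ρ⁻¹)) := fun k _ => by
    rw [← hexp, ← two_cos_eq_exp_add_inv]
    linear_combination hαβ / 2
  have hwn : w ^ n + w⁻¹ ^ n = 2 * cos (n * θ) := by
    rw [two_cos_eq_exp_add_inv, inv_pow, ← exp_nat_mul, mul_assoc]
  rw [prod_congr rfl factor, prod_mul_distrib, prod_const, card_range,
    (isPrimitiveRoot_exp n hn.ne').prod_range_add_inv_sub_add_inv hn (exp_ne_zero _) hρ, hwn,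
    neg_div, neg_pow (β / 2)]
  ring

end Complex

theorem Real.exists_prod_range_add_mul_cos {n : ℕ} (hn : 0 < n) (α β : ℝ) :
    ∃ c : ℝ, ∀ θ : ℝ, ∏ k ∈ range n, (α + β * cos (θ + 2 * k * π / n)) =
      c - 2 * (-β / 2) ^ n * cos (n * θ) := by
  rcases eq_or_ne β 0 with rfl | hβ
  · exact ⟨α ^ n, fun θ => by simp [zero_pow hn.ne']⟩
  obtain ⟨ρ, hρ, hρu⟩ := IsAlgClosed.exists_add_inv_eq (-2 * α / β : ℂ)
  have hαβ : (β : ℂ) * (ρ + ρ⁻¹) = -2 * α := by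
    have hβ' : (β : ℂ) ≠ 0 := by exact_mod_cast hβ
    rw [hρu]
    field_simp
  have key : ∀ θ : ℝ, ((∏ k ∈ range n, (α + β * cos (θ + 2 * k * π / n)) +
      2 * (-β / 2) ^ n * cos (n * θ) : ℝ) : ℂ) = (-β / 2) ^ n * (ρ ^ n + ρ⁻¹ ^ n) := fun θ => by
    push_cast
    rw [Complex.prod_range_add_mul_cos hn hρ hαβ]
    ring
  exact ⟨_, fun θ => eq_sub_of_add_eq (Complex.ofReal_injective ((key θ).trans (key 0).symm))⟩

theorem stmt3_general (n : ℕ) (hn : 1 ≤ n) (r1 r2 : ℝ)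
    (hconst : ∀ θ₁ θ₂ : ℝ,
      (∏ k ∈ Finset.range n,
        ((1 - r1 ^ 2 - r2 ^ 2) + 2 * r1 * r2 * Real.cos (θ₁ + 2 * (k : ℝ) * Real.pi / n))) =
      ∏ k ∈ Finset.range n,
        ((1 - r1 ^ 2 - r2 ^ 2) + 2 * r1 * r2 * Real.cos (θ₂ + 2 * (k : ℝ) * Real.pi / n))) :
    r1 = 0 ∨ r2 = 0 := by
  obtain ⟨c, hc⟩ := Real.exists_prod_range_add_mul_cos hn (1 - r1 ^ 2 - r2 ^ 2) (2 * r1 * r2)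
  have h := hconst 0 (π / n)
  have hn' : (n : ℝ) ≠ 0 := by positivity
  rw [hc, hc, mul_zero, Real.cos_zero, mul_div_cancel₀ _ hn', Real.cos_pi] at h
  have hβ : (-(2 * r1 * r2) / 2) ^ n = 0 := by linarith
  simpa using (pow_eq_zero_iff (by omega)).mp hβ

/-- If the trigonometric product θ ↦ Π_{k<n} (α + β cos(θ + 2kπ/n)), with
α = 1 - r₁² - r₂², β = 2 r₁ r₂ and r₁, r₂ ≥ 0, is constant in θ, then
r₁ = 0 or r₂ = 0. -/
theorem stmt3 (n : ℕ) (hn : 1 ≤ n) (r1 r2 : ℝ) (h1 : 0 ≤ r1) (h2 : 0 ≤ r2)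
    (hconst : ∀ θ₁ θ₂ : ℝ,
      (∏ k ∈ Finset.range n,
        ((1 - r1 ^ 2 - r2 ^ 2) + 2 * r1 * r2 * Real.cos (θ₁ + 2 * (k : ℝ) * Real.pi / n))) =
      ∏ k ∈ Finset.range n,
        ((1 - r1 ^ 2 - r2 ^ 2) + 2 * r1 * r2 * Real.cos (θ₂ + 2 * (k : ℝ) * Real.pi / n))) :
    r1 = 0 ∨ r2 = 0 :=
  stmt3_general n hn r1 r2 hconst
end
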